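/- In the twisted Heisenberg-Virasoro Verma module with c_I = 0, c_{L,I} ≠ 0 and h_I = -c_{L,I} (so p = 2), the vector Λ = (L(-2) + (1/c_{L,I})I(-1)L(-1) + ((c_L + 8h - 2)/(16 c_{L,I}))I(-2) + ((c_L + 24h - 2)/(48 c_{L,I}²))I(-1)²)·v is a singular vector: L(n)Λ = I(n)Λ = 0 for all n ≥ 1. -/

import Mathlib

/-- A representation of the twisted Heisenberg-Virasoro algebra `HVir` at level zero
(`C_I` acts by `0`), with the central elements `C_L`, `C_{LI}` acting by the scalars
`cL`, `cLI`. -/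
structure HVirRep (V : Type*) [AddCommGroup V] [Module ℂ V] where
  L : ℤ → Module.End ℂ V
  I : ℤ → Module.End ℂ V
  cL : ℂ
  cLI : ℂ
  rel_LL : ∀ n m : ℤ, L n * L m - L m * L n =
    ((n : ℂ) - m) • L (n + m) +
      (if n + m = 0 then (((n : ℂ) ^ 3 - n) / 12) * cL else 0) • (1 : Module.End ℂ V)
  rel_LI : ∀ n m : ℤ, L n * I m - I m * L n =
    (-(m : ℂ)) • I (n + m) -
      (if n + m = 0 then ((n : ℂ) ^ 2 + n) * cLI else 0) • (1 : Module.End ℂ V)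
  rel_II : ∀ n m : ℤ, I n * I m = I m * I n

/-! Because `[L(n), L(1)] = (n - 1) L(n + 1)` and `[L(1), I(n)] = -n I(n + 1)`, a vector killed
by `L(1)`, `L(2)` and `I(1)` is killed by every `L(n)` and `I(n)` with `n ≥ 1`. For `Λ` these three
conditions are a computation in degree two: commuting the positive modes through to `v` turns
`L(1)Λ`, `L(2)Λ`, `I(1)Λ` into combinations of `L(-1)v`, `I(-1)v` and `v`, and with
`I(0)v = -c_{L,I} v` the coefficients of `Λ` make every one of them cancel. -/

namespace HVirRep

variable {V : Type*} [AddCommGroup V] [Module ℂ V] (ρ : HVirRep V)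

theorem L_L_apply (n m : ℤ) (w : V) :
    ρ.L n (ρ.L m w) = ρ.L m (ρ.L n w) + ((n : ℂ) - m) • ρ.L (n + m) w +
      (if n + m = 0 then (((n : ℂ) ^ 3 - n) / 12) * ρ.cL else 0) • w := by
  have h := congrArg (fun f : Module.End ℂ V => f w) (ρ.rel_LL n m)
  simp only [LinearMap.sub_apply, LinearMap.add_apply, LinearMap.smul_apply,
    Module.End.mul_apply, Module.End.one_apply] at h
  rw [add_assoc, ← h, add_sub_cancel]

theorem L_I_apply (n m : ℤ) (w : V) :
    ρ.L n (ρ.I m w) = ρ.I m (ρ.L n w) + (-(m : ℂ)) • ρ.I (n + m) w -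
      (if n + m = 0 then ((n : ℂ) ^ 2 + n) * ρ.cLI else 0) • w := by
  have h := congrArg (fun f : Module.End ℂ V => f w) (ρ.rel_LI n m)
  simp only [LinearMap.sub_apply, LinearMap.smul_apply,
    Module.End.mul_apply, Module.End.one_apply] at h
  rw [add_sub_assoc, ← h, add_sub_cancel]

theorem I_L_apply (n m : ℤ) (w : V) :
    ρ.I m (ρ.L n w) = ρ.L n (ρ.I m w) + (m : ℂ) • ρ.I (n + m) w +
      (if n + m = 0 then ((n : ℂ) ^ 2 + n) * ρ.cLI else 0) • w := by
  rw [L_I_apply]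
  module

theorem I_I_apply (n m : ℤ) (w : V) : ρ.I n (ρ.I m w) = ρ.I m (ρ.I n w) :=
  congrArg (fun f : Module.End ℂ V => f w) (ρ.rel_II n m)

def IsSingular (w : V) : Prop :=
  ∀ n : ℤ, 1 ≤ n → ρ.L n w = 0 ∧ ρ.I n w = 0

theorem isSingular_of_L_one_of_L_two_of_I_one {w : V} (hL1 : ρ.L 1 w = 0)
    (hL2 : ρ.L 2 w = 0) (hI1 : ρ.I 1 w = 0) : ρ.IsSingular w := by
  have hL : ∀ k : ℕ, ρ.L (k + 1) w = 0 := by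
    intro k
    induction k with
    | zero => simpa using hL1
    | succ k ih =>
      rcases k.eq_zero_or_pos with rfl | hk
      · simpa using hL2
      have h := ρ.L_L_apply (k + 1) 1 w
      simp only [ih, hL1, map_zero, if_neg (show (k : ℤ) + 1 + 1 ≠ 0 by omega), zero_smul,
        add_zero, zero_add] at h
      rw [eq_comm, smul_eq_zero] at h
      push_cast at h ⊢
      rw [add_assoc, one_add_one_eq_two]
      exact h.resolve_left (by simpa using hk.ne')
  have hI : ∀ k : ℕ, ρ.I (k + 1) w = 0 := by
    intro k
    induction k with
    | zero => simpa using hI1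
    | succ k ih =>
      have h := ρ.L_I_apply 1 (k + 1) w
      simp only [ih, hL1, map_zero, if_neg (show 1 + ((k : ℤ) + 1) ≠ 0 by omega), zero_smul,
        sub_zero, zero_add] at h
      rw [eq_comm, smul_eq_zero] at h
      push_cast at h ⊢
      rw [add_comm 1, add_assoc, one_add_one_eq_two] at h
      exact h.resolve_left (by norm_cast)
  intro n hn
  obtain ⟨k, rfl⟩ : ∃ k : ℕ, n = k + 1 := ⟨(n - 1).toNat, by omega⟩
  exact ⟨hL k, hI k⟩

structure IsHighestWeight (v : V) (h hI : ℂ) : Prop where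
  L_pos : ∀ n : ℤ, 0 < n → ρ.L n v = 0
  I_pos : ∀ n : ℤ, 0 < n → ρ.I n v = 0
  L_zero : ρ.L 0 v = h • v
  I_zero : ρ.I 0 v = hI • v

noncomputable def singularVectorPTwo (h : ℂ) (v : V) : V :=
  ρ.L (-2) v + (ρ.cLI)⁻¹ • ρ.I (-1) (ρ.L (-1) v) +
    ((ρ.cL + 8 * h - 2) / (16 * ρ.cLI)) • ρ.I (-2) v +
    ((ρ.cL + 24 * h - 2) / (48 * ρ.cLI ^ 2)) • ρ.I (-1) (ρ.I (-1) v)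

namespace IsHighestWeight

variable {ρ} {v : V} {h hI : ℂ}

theorem L_one_L_neg_one (hv : ρ.IsHighestWeight v h hI) : ρ.L 1 (ρ.L (-1) v) = (2 * h) • v := by
  rw [L_L_apply]
  norm_num [hv.L_pos, hv.L_zero, smul_smul]

theorem L_two_L_neg_one (hv : ρ.IsHighestWeight v h hI) : ρ.L 2 (ρ.L (-1) v) = 0 := by
  rw [L_L_apply]
  norm_num [hv.L_pos]

theorem L_one_I_neg_one (hv : ρ.IsHighestWeight v h hI) :
    ρ.L 1 (ρ.I (-1) v) = (hI - 2 * ρ.cLI) • v := by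
  rw [L_I_apply]
  norm_num [hv.L_pos, hv.I_zero]
  module

theorem L_two_I_neg_one (hv : ρ.IsHighestWeight v h hI) : ρ.L 2 (ρ.I (-1) v) = 0 := by
  rw [L_I_apply]
  norm_num [hv.L_pos, hv.I_pos]

theorem I_zero_L_neg_one (hv : ρ.IsHighestWeight v h hI) :
    ρ.I 0 (ρ.L (-1) v) = hI • ρ.L (-1) v := by
  rw [I_L_apply]
  norm_num [hv.I_zero]

theorem I_one_L_neg_one (hv : ρ.IsHighestWeight v h hI) : ρ.I 1 (ρ.L (-1) v) = hI • v := by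
  rw [I_L_apply]
  norm_num [hv.I_pos, hv.I_zero]

theorem I_zero_I_neg_one (hv : ρ.IsHighestWeight v h hI) :
    ρ.I 0 (ρ.I (-1) v) = hI • ρ.I (-1) v := by
  rw [I_I_apply, hv.I_zero, map_smul]

theorem I_one_I_neg_one (hv : ρ.IsHighestWeight v h hI) : ρ.I 1 (ρ.I (-1) v) = 0 := by
  rw [I_I_apply, hv.I_pos 1 one_pos, map_zero]

theorem L_one_singularVectorPTwo (hv : ρ.IsHighestWeight v h (-ρ.cLI)) (hc : ρ.cLI ≠ 0) :
    ρ.L 1 (ρ.singularVectorPTwo h v) = 0 := by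
  have h₁ : ρ.L 1 (ρ.L (-2) v) = (3 : ℂ) • ρ.L (-1) v := by
    rw [L_L_apply]
    norm_num [hv.L_pos]
  have h₂ : ρ.L 1 (ρ.I (-1) (ρ.L (-1) v)) =
      (2 * h) • ρ.I (-1) v + (-3 * ρ.cLI) • ρ.L (-1) v := by
    rw [L_I_apply, hv.L_one_L_neg_one]
    norm_num [hv.I_zero_L_neg_one]
    module
  have h₃ : ρ.L 1 (ρ.I (-2) v) = (2 : ℂ) • ρ.I (-1) v := by
    rw [L_I_apply]
    norm_num [hv.L_pos]
  have h₄ : ρ.L 1 (ρ.I (-1) (ρ.I (-1) v)) = (-6 * ρ.cLI) • ρ.I (-1) v := by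
    rw [L_I_apply, hv.L_one_I_neg_one]
    norm_num [hv.I_zero_I_neg_one]
    module
  simp only [singularVectorPTwo, map_add, map_smul, h₁, h₂, h₃, h₄]
  match_scalars <;> field_simp <;> ring

theorem L_two_singularVectorPTwo (hv : ρ.IsHighestWeight v h (-ρ.cLI)) (hc : ρ.cLI ≠ 0) :
    ρ.L 2 (ρ.singularVectorPTwo h v) = 0 := by
  have h₁ : ρ.L 2 (ρ.L (-2) v) = (4 * h + ρ.cL / 2) • v := by
    rw [L_L_apply]
    norm_num [hv.L_pos, hv.L_zero]
    module
  have h₂ : ρ.L 2 (ρ.I (-1) (ρ.L (-1) v)) = (-ρ.cLI) • v := by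
    rw [L_I_apply, hv.L_two_L_neg_one]
    norm_num [hv.I_one_L_neg_one]
  have h₃ : ρ.L 2 (ρ.I (-2) v) = (-8 * ρ.cLI) • v := by
    rw [L_I_apply]
    norm_num [hv.L_pos, hv.I_zero]
    module
  have h₄ : ρ.L 2 (ρ.I (-1) (ρ.I (-1) v)) = 0 := by
    rw [L_I_apply, hv.L_two_I_neg_one]
    norm_num [hv.I_one_I_neg_one]
  simp only [singularVectorPTwo, map_add, map_smul, h₁, h₂, h₃, h₄, smul_zero]
  match_scalars
  field_simp
  ring

theorem I_one_singularVectorPTwo (hv : ρ.IsHighestWeight v h (-ρ.cLI)) (hc : ρ.cLI ≠ 0) :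
    ρ.I 1 (ρ.singularVectorPTwo h v) = 0 := by
  have h₁ : ρ.I 1 (ρ.L (-2) v) = ρ.I (-1) v := by
    rw [I_L_apply]
    norm_num [hv.I_pos]
  have h₂ : ρ.I 1 (ρ.I (-1) (ρ.L (-1) v)) = (-ρ.cLI) • ρ.I (-1) v := by
    rw [I_I_apply, hv.I_one_L_neg_one, map_smul]
  have h₃ : ρ.I 1 (ρ.I (-2) v) = 0 := by
    rw [I_I_apply, hv.I_pos 1 one_pos, map_zero]
  have h₄ : ρ.I 1 (ρ.I (-1) (ρ.I (-1) v)) = 0 := by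
    rw [I_I_apply, hv.I_one_I_neg_one, map_zero]
  simp only [singularVectorPTwo, map_add, map_smul, h₁, h₂, h₃, h₄, smul_zero, add_zero]
  match_scalars
  field_simp
  ring

end IsHighestWeight

end HVirRep

/-- In any highest weight representation of the twisted Heisenberg-Virasoro algebra at
level zero with `c_{L,I} ≠ 0` and highest weight `(h, h_I) = (h, -c_{L,I})` (so `p = 2`),
the vector
`Λ = (L(-2) + (1/c_{L,I}) I(-1)L(-1) + ((c_L + 8h - 2)/(16 c_{L,I})) I(-2)
     + ((c_L + 24h - 2)/(48 c_{L,I}²)) I(-1)²) v`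
is a singular vector: `L(n)Λ = I(n)Λ = 0` for all `n ≥ 1`. -/
theorem singular_vector_p_two {V : Type*} [AddCommGroup V] [Module ℂ V]
    (ρ : HVirRep V) (v : V) (h : ℂ) (hc : ρ.cLI ≠ 0)
    (hLv : ∀ n : ℤ, 0 < n → ρ.L n v = 0) (hIv : ∀ n : ℤ, 0 < n → ρ.I n v = 0)
    (hL0 : ρ.L 0 v = h • v) (hI0 : ρ.I 0 v = (-ρ.cLI) • v) :
    ∀ n : ℤ, 1 ≤ n →
      ρ.L n (ρ.L (-2) v + (ρ.cLI)⁻¹ • ρ.I (-1) (ρ.L (-1) v) +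
          ((ρ.cL + 8 * h - 2) / (16 * ρ.cLI)) • ρ.I (-2) v +
          ((ρ.cL + 24 * h - 2) / (48 * ρ.cLI ^ 2)) • ρ.I (-1) (ρ.I (-1) v)) = 0 ∧
      ρ.I n (ρ.L (-2) v + (ρ.cLI)⁻¹ • ρ.I (-1) (ρ.L (-1) v) +
          ((ρ.cL + 8 * h - 2) / (16 * ρ.cLI)) • ρ.I (-2) v +
          ((ρ.cL + 24 * h - 2) / (48 * ρ.cLI ^ 2)) • ρ.I (-1) (ρ.I (-1) v)) = 0 := by
  have hv : ρ.IsHighestWeight v h (-ρ.cLI) := ⟨hLv, hIv, hL0, hI0⟩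
  exact ρ.isSingular_of_L_one_of_L_two_of_I_one (hv.L_one_singularVectorPTwo hc)
    (hv.L_two_singularVectorPTwo hc) (hv.I_one_singularVectorPTwo hc)
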